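/- arXiv:1502.01327 — 6 statements merged into one kernel-verified Lean document; each statement's English description precedes it below -/
import Mathlib

section
/- Let t ≥ 1 and let σ, h be permutations of {1,…,t} with h(t) = t (the uppermost horizontal strand in the B-square belongs to string t). Then N_B − N_A = −(t − 1). -/
open Finset

/-- `epsBW σ h i j` is the sign ε_{ij} in the B-square: `a` is the element of
`{i,j}` whose vertical strand is further left (smaller `σ`), `b` is the element
whose horizontal strand is higher (larger `h`); ε = 1 if `a > b`, −1 if `a < b`,
0 if `a = b`.  (Strings are indexed 0,…,t−1 instead of 1,…,t.) -/
def epsBW {t : ℕ} (σ h : Equiv.Perm (Fin t)) (i j : Fin t) : ℤ :=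
  let a : Fin t := if σ i < σ j then i else j
  let b : Fin t := if h i < h j then j else i
  if b < a then 1 else if a < b then -1 else 0

/-- The A-square heights: `hA h` is the cyclic relabeling of `h`,
`(hA h) 0 = h (t-1)` and `(hA h) i = h (i-1)` for `i ≥ 1`
(0-indexed version of h′(1) = h(t), h′(i) = h(i−1)). -/
def hA {t : ℕ} (h : Equiv.Perm (Fin t)) : Fin t → Fin t :=
  fun i => h ((finRotate t).symm i)

/-- `deltaBW σ h i j` is the sign δ_{ij} in the A-square: `a'` is the element of
`{i,j}` whose vertical strand is further right (larger `σ`), `b'` is the element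
whose A-square horizontal strand is lower (smaller `hA h`); δ = 1 if `b' > a'`,
−1 if `b' < a'`, 0 if `b' = a'`. -/
def deltaBW {t : ℕ} (σ h : Equiv.Perm (Fin t)) (i j : Fin t) : ℤ :=
  let a' : Fin t := if σ i < σ j then j else i
  let b' : Fin t := if hA h i < hA h j then i else j
  if a' < b' then 1 else if b' < a' then -1 else 0

/-- `N_B = Σ_{i<j} ε_{ij}`. -/
def NB {t : ℕ} (σ h : Equiv.Perm (Fin t)) : ℤ :=
  ∑ p ∈ Finset.univ.filter (fun p : Fin t × Fin t => p.1 < p.2), epsBW σ h p.1 p.2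

/-- `N_A = Σ_{i<j} δ_{ij}`. -/
def NA {t : ℕ} (σ h : Equiv.Perm (Fin t)) : ℤ :=
  ∑ p ∈ Finset.univ.filter (fun p : Fin t × Fin t => p.1 < p.2), deltaBW σ h p.1 p.2

/-! For `i < j`, `ε_{ij} = [σ inverts (i, j)] + [h inverts (i, j)] - 1`, and likewise
`δ_{ij}` with `h′` in place of `h`, so `N_B - N_A = inv h - inv h′`. The heights `h′` are `h`
rotated by one place: the top strand `h t = t` moves to the front, where it is inverted with each
of the other `t - 1` strands, and what remains is `h` with its last, uninverted, entry dropped.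
Hence `inv h′ = inv h + (t - 1)`. -/

theorem finRotate_symm_zero (n : ℕ) : (finRotate (n + 1)).symm 0 = Fin.last n :=
  (finRotate _).symm_apply_eq.2 finRotate_last.symm

theorem finRotate_symm_succ {n : ℕ} (i : Fin n) :
    (finRotate (n + 1)).symm i.succ = i.castSucc := by
  rw [Equiv.symm_apply_eq, Fin.ext_iff, coe_finRotate_of_ne_last (Fin.castSucc_lt_last i).ne]
  rfl

namespace Fin

variable {α : Type*} {n : ℕ}

section LT

variable [LT α] [DecidableLT α]

def inversions (f : Fin n → α) : ℕ :=
  #{p : Fin n × Fin n | p.1 < p.2 ∧ f p.2 < f p.1}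

theorem inversions_eq_sum_ite (f : Fin n → α) :
    inversions f = ∑ i, ∑ j, if i < j ∧ f j < f i then 1 else 0 := by
  rw [inversions, card_filter, Fintype.sum_prod_type]

theorem cast_inversions_eq_sum (f : Fin n → α) :
    (inversions f : ℤ) = ∑ p ∈ univ.filter (fun p : Fin n × Fin n => p.1 < p.2),
      if f p.2 < f p.1 then 1 else 0 := by
  rw [inversions, ← filter_filter, card_filter]
  push_cast
  rfl

theorem inversions_eq_add_inversions_tail (f : Fin (n + 1) → α) :
    inversions f = #{j : Fin n | f j.succ < f 0} + inversions (tail f) := by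
  simp only [inversions_eq_sum_ite, sum_univ_succ, card_filter, succ_pos, not_lt_zero,
    succ_lt_succ_iff, false_and, true_and, if_false, zero_add]
  rfl

theorem inversions_eq_add_inversions_init (f : Fin (n + 1) → α) :
    inversions f = #{i : Fin n | f (last n) < f i.castSucc} + inversions (init f) := by
  simp only [inversions_eq_sum_ite, sum_univ_castSucc, card_filter, lt_irrefl, castSucc_lt_last,
    not_lt_of_ge (le_last _), castSucc_lt_castSucc_iff, false_and, true_and, if_false,
    sum_const_zero, add_zero, sum_add_distrib]
  exact add_comm _ _

end LT

theorem inversions_comp_finRotate_symm [Preorder α] [DecidableLT α] (f : Fin (n + 1) → α)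
    (hf : ∀ i : Fin n, f i.castSucc < f (last n)) :
    inversions (f ∘ (finRotate (n + 1)).symm) = inversions f + n := by
  have h_tail : tail (f ∘ (finRotate (n + 1)).symm) = init f :=
    funext fun i => congrArg f (finRotate_symm_succ i)
  rw [inversions_eq_add_inversions_tail, inversions_eq_add_inversions_init f, h_tail]
  simp only [Function.comp_apply, finRotate_symm_succ, finRotate_symm_zero, hf,
    (hf _).not_gt, filter_true, filter_false, card_univ, Fintype.card_fin, card_empty]
  ring

end Fin

open Fin

theorem epsBW_of_lt {t : ℕ} (σ h : Equiv.Perm (Fin t)) {i j : Fin t} (hij : i < j) :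
    epsBW σ h i j = (if σ j < σ i then 1 else 0) + (if h j < h i then 1 else 0) - 1 := by
  have hσ := σ.injective.ne hij.ne
  have hh := h.injective.ne hij.ne
  simp only [epsBW]
  split_ifs <;> omega

theorem deltaBW_of_lt {t : ℕ} (σ h : Equiv.Perm (Fin t)) {i j : Fin t} (hij : i < j) :
    deltaBW σ h i j =
      (if σ j < σ i then 1 else 0) + (if hA h j < hA h i then 1 else 0) - 1 := by
  have hσ := σ.injective.ne hij.ne
  have hh : hA h i ≠ hA h j := (h.injective.comp (finRotate t).symm.injective).ne hij.ne
  simp only [deltaBW]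
  split_ifs <;> omega

theorem NB_sub_NA_eq_inversions_sub {t : ℕ} (σ h : Equiv.Perm (Fin t)) :
    NB σ h - NA σ h = inversions h - inversions (hA h) := by
  rw [NB, NA, cast_inversions_eq_sum, cast_inversions_eq_sum, ← sum_sub_distrib,
    ← sum_sub_distrib]
  refine sum_congr rfl fun p hp => ?_
  rw [epsBW_of_lt σ h (mem_filter.1 hp).2, deltaBW_of_lt σ h (mem_filter.1 hp).2]
  ring

/-- If the uppermost horizontal strand in the B-square belongs to string `t`
(0-indexed: `h (t-1) = t-1`), then `N_B − N_A = −(t−1)`. -/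
theorem NB_sub_NA_eq (t : ℕ) (ht : 1 ≤ t) (σ h : Equiv.Perm (Fin t))
    (hh : h ⟨t - 1, by omega⟩ = ⟨t - 1, by omega⟩) :
    NB σ h - NA σ h = -((t : ℤ) - 1) := by
  obtain ⟨n, rfl⟩ : ∃ n, t = n + 1 := ⟨t - 1, by omega⟩
  have h_last : h (last n) = last n := hh
  have h_top (i : Fin n) : h i.castSucc < h (last n) := by
    rw [h_last, lt_last_iff_ne_last, ← h_last]
    exact h.injective.ne (castSucc_lt_last i).ne
  rw [NB_sub_NA_eq_inversions_sub, show hA h = h ∘ (finRotate (n + 1)).symm from rfl,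
    inversions_comp_finRotate_symm h h_top]
  push_cast
  ring
end

section
/- Let t ≥ 1, let σ, h be permutations of {1,…,t}, and let k ≠ l be elements of {1,…,t}. If σ is replaced by σ ∘ (k l), i.e., the positions of the vertical strands of strings k and l are interchanged while h is unchanged, then N_B − N_A does not change: N_B(σ∘(k l), h) − N_A(σ∘(k l), h) = N_B(σ, h) − N_A(σ, h). -/
open Finset

/-- For `i < j`, the difference `ε_{ij} − δ_{ij}` does not depend on `σ`. -/
lemma epsBW_sub_deltaBW {t : ℕ} (σ h : Equiv.Perm (Fin t)) {i j : Fin t}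
    (hij : i < j) :
    epsBW σ h i j - deltaBW σ h i j =
      (if hA h i < hA h j then (1 : ℤ) else 0) - (if h i < h j then 1 else 0) := by
  by_cases hc : σ i < σ j <;> by_cases hb : h i < h j <;> by_cases hb' : hA h i < hA h j <;>
    simp [epsBW, deltaBW, hc, hb, hb', hij, hij.not_gt, lt_irrefl]

/-- Interchanging the vertical strands of strings `k` and `l` (replacing `σ`
by `σ ∘ (k l)`, leaving `h` unchanged) does not change `N_B − N_A`. -/
theorem NB_sub_NA_swap (t : ℕ) (ht : 1 ≤ t) (σ h : Equiv.Perm (Fin t))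
    (k l : Fin t) (hkl : k ≠ l) :
    NB (σ * Equiv.swap k l) h - NA (σ * Equiv.swap k l) h = NB σ h - NA σ h := by
  unfold NB NA
  rw [← Finset.sum_sub_distrib, ← Finset.sum_sub_distrib]
  refine Finset.sum_congr rfl fun p hp => ?_
  simp only [Finset.mem_filter] at hp
  rw [epsBW_sub_deltaBW _ h hp.2, epsBW_sub_deltaBW _ h hp.2]
end

section
/- Let t ≥ 1, let h be a permutation of {1,…,t}, and let i ≠ j be elements of {1,…,t}. Then the difference ε_{ij} − δ_{ij} does not depend on the permutation σ: for any two permutations σ₁, σ₂ of {1,…,t}, ε_{ij}(σ₁, h) − δ_{ij}(σ₁, h) = ε_{ij}(σ₂, h) − δ_{ij}(σ₂, h). -/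
open Finset

set_option maxHeartbeats 2000000 in
/-- For distinct `i, j`, the difference `ε_{ij} − δ_{ij}` does not depend on the
permutation `σ` recording the positions of the vertical strands. -/
theorem eps_sub_delta_indep_of_sigma (t : ℕ) (ht : 1 ≤ t) (h : Equiv.Perm (Fin t))
    (i j : Fin t) (hij : i ≠ j) (σ₁ σ₂ : Equiv.Perm (Fin t)) :
    epsBW σ₁ h i j - deltaBW σ₁ h i j = epsBW σ₂ h i j - deltaBW σ₂ h i j := by
  have h1 : i < j ∨ j < i := hij.lt_or_gt
  have c1 : σ₁ i < σ₁ j ∨ σ₁ j < σ₁ i := (σ₁.injective.ne hij).lt_or_gt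
  have c2 : σ₂ i < σ₂ j ∨ σ₂ j < σ₂ i := (σ₂.injective.ne hij).lt_or_gt
  simp only [epsBW, deltaBW]
  rcases c1 with c1 | c1 <;> rcases c2 with c2 | c2 <;> rcases h1 with h1 | h1 <;>
    split_ifs <;> simp only [Fin.lt_def] at * <;> omega
end

section
/- Let t ≥ 2, let h be a permutation of {1,…,t}, and take σ = id. Then the sum of ε_{ij} over unordered pairs with i, j ≠ t equals the sum of δ_{ij} over unordered pairs with i, j ≠ 1: Σ_{1≤i<j≤t−1} ε_{ij} = Σ_{2≤i<j≤t} δ_{ij}. -/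
open Finset

/-!
With `σ = id`, for `i < j` both signs collapse: `ε_{ij} = -[h i < h j]` and
`δ_{ij} = -[h' i < h' j]`. The rotation `i ↦ i + 1` carries the pairs avoiding the last string
order-preservingly onto the pairs avoiding the first one, and `h' (i + 1) = h i`, so it matches
the two sums term by term.
-/

lemma epsBW_one_of_lt {t : ℕ} (h : Equiv.Perm (Fin t)) {i j : Fin t} (hij : i < j) :
    epsBW 1 h i j = if h i < h j then -1 else 0 := by
  by_cases hh : h i < h j <;> simp [epsBW, hij, hh, hij.not_gt]

lemma deltaBW_one_of_lt {t : ℕ} (h : Equiv.Perm (Fin t)) {i j : Fin t} (hij : i < j) :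
    deltaBW 1 h i j = if hA h i < hA h j then -1 else 0 := by
  by_cases hh : hA h i < hA h j <;> simp [deltaBW, hij, hh, hij.not_gt]

lemma hA_finRotate {t : ℕ} (h : Equiv.Perm (Fin t)) (i : Fin t) : hA h (finRotate t i) = h i := by
  simp only [hA, Equiv.symm_apply_apply]

lemma finRotate_lt_finRotate_and_pos_iff {t : ℕ} (i j : Fin t) :
    finRotate t i < finRotate t j ∧ 0 < (finRotate t i : ℕ) ∧ 0 < (finRotate t j : ℕ) ↔
      i < j ∧ (i : ℕ) + 1 < t ∧ (j : ℕ) + 1 < t := by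
  cases t with
  | zero => exact i.elim0
  | succ n =>
    simp only [Fin.lt_def, coe_finRotate, Fin.ext_iff, Fin.val_last]
    split_ifs <;> omega

theorem sum_eps_eq_sum_delta_general (t : ℕ) (h : Equiv.Perm (Fin t)) :
    ∑ p ∈ Finset.univ.filter
        (fun p : Fin t × Fin t => p.1 < p.2 ∧ (p.1 : ℕ) + 1 < t ∧ (p.2 : ℕ) + 1 < t),
      epsBW 1 h p.1 p.2
      = ∑ p ∈ Finset.univ.filter
          (fun p : Fin t × Fin t => p.1 < p.2 ∧ 0 < (p.1 : ℕ) ∧ 0 < (p.2 : ℕ)),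
        deltaBW 1 h p.1 p.2 := by
  refine Finset.sum_equiv ((finRotate t).prodCongr (finRotate t)) ?_ ?_
  · rintro ⟨i, j⟩
    simpa only [mem_filter, mem_univ, true_and, Equiv.prodCongr_apply, Prod.map]
      using (finRotate_lt_finRotate_and_pos_iff i j).symm
  · rintro ⟨i, j⟩ hij
    rw [mem_filter] at hij
    have hrot : finRotate t i < finRotate t j := ((finRotate_lt_finRotate_and_pos_iff i j).2 hij.2).1
    rw [epsBW_one_of_lt h hij.2.1, Equiv.prodCongr_apply, Prod.map,
      deltaBW_one_of_lt h hrot, hA_finRotate, hA_finRotate]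

/-- With `σ = id`, the sum of `ε_{ij}` over unordered pairs with `i, j ≠ t`
(0-indexed: both coordinates different from `t-1`) equals the sum of `δ_{ij}`
over unordered pairs with `i, j ≠ 1` (0-indexed: both coordinates nonzero). -/
theorem sum_eps_eq_sum_delta (t : ℕ) (ht : 2 ≤ t) (h : Equiv.Perm (Fin t)) :
    ∑ p ∈ Finset.univ.filter
        (fun p : Fin t × Fin t => p.1 < p.2 ∧ (p.1 : ℕ) + 1 < t ∧ (p.2 : ℕ) + 1 < t),
      epsBW 1 h p.1 p.2
      = ∑ p ∈ Finset.univ.filter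
          (fun p : Fin t × Fin t => p.1 < p.2 ∧ 0 < (p.1 : ℕ) ∧ 0 < (p.2 : ℕ)),
        deltaBW 1 h p.1 p.2 :=
  sum_eps_eq_sum_delta_general t h
end

section
/- Let a, b ≥ 1 and let π be a Lorenz permutation of {1,…,a+b} with trip number t, with μ_1 < … < μ_t and ν_1 < … < ν_t defined from π as below. Then the number of inversions of π (pairs i < j with π(i) > π(j)), which equals the number of crossings c of the associated Lorenz braid and of its grid diagram, satisfies c = (a+b)t − Σ_{k=1}^t μ_k − Σ_{k=1}^t ν_k + t. -/
open Finset

private lemma ite_lt_add_ite_lt {n : ℕ} (x y : Fin n) :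
    (if y < x then (1:ℕ) else 0) + (if x < y then 1 else 0) = if y = x then 0 else 1 := by
  rcases lt_trichotomy x y with h | h | h
  · simp [h, not_lt_of_gt h, h.ne']
  · simp [h]
  · simp [h, not_lt_of_gt h, h.ne]

/-- Crossing number of the Lorenz braid/grid diagram.  Points are indexed
`0,…,a+b-1` (0-indexed versions of the 1-based labels `1,…,a+b`): indices
`< a` are the left-hand points `p_1 < … < p_a`, indices `≥ a` are the
right-hand points `q_b < … < q_1` (so `q_ν` has 1-based label `a+b−ν+1`).
A Lorenz permutation `π` is strictly increasing on each of the two blocks.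
`M` is the set of (1-based) positions `μ_1 < … < μ_t` of
`{1,…,a} ∩ π({a+1,…,a+b})`, `N` is the set of indices `ν_1 < … < ν_t` with
`q_ν ∈ π({1,…,a})`, and `t = #M` is the trip number.  The number of
inversions of `π` — the number of crossings `c` of the associated positive
braid and of its grid diagram — equals `(a+b)t − Σμ_k − Σν_k + t`. -/
theorem lorenz_crossing_number (a b : ℕ) (ha : 1 ≤ a) (hb : 1 ≤ b)
    (π : Equiv.Perm (Fin (a + b)))
    (hL : StrictMonoOn π {i : Fin (a + b) | (i : ℕ) < a})
    (hR : StrictMonoOn π {i : Fin (a + b) | a ≤ (i : ℕ)}) :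
    letI M : Finset ℕ :=
      (Finset.univ.filter (fun i : Fin (a + b) =>
        (i : ℕ) < a ∧ ∃ j : Fin (a + b), a ≤ (j : ℕ) ∧ π j = i)).image
        (fun i : Fin (a + b) => (i : ℕ) + 1)
    letI N : Finset ℕ :=
      (Finset.Icc 1 b).filter (fun ν =>
        ∃ j : Fin (a + b), (j : ℕ) < a ∧ (π j : ℕ) + 1 = a + b - ν + 1)
    letI t : ℕ := M.card
    ((Finset.univ.filter
        (fun p : Fin (a + b) × Fin (a + b) => p.1 < p.2 ∧ π p.2 < π p.1)).card : ℤ)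
      = (a + b : ℤ) * t - (∑ m ∈ M, (m : ℤ)) - (∑ ν ∈ N, (ν : ℤ)) + t := by
  classical
  set M : Finset ℕ :=
      (Finset.univ.filter (fun i : Fin (a + b) =>
        (i : ℕ) < a ∧ ∃ j : Fin (a + b), a ≤ (j : ℕ) ∧ π j = i)).image
        (fun i : Fin (a + b) => (i : ℕ) + 1) with hMdef
  set N : Finset ℕ :=
      (Finset.Icc 1 b).filter (fun ν =>
        ∃ j : Fin (a + b), (j : ℕ) < a ∧ (π j : ℕ) + 1 = a + b - ν + 1) with hNdef
  set t : ℕ := M.card with htdef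
  have hba : a < a + b := by omega
  set L0 : Finset (Fin (a + b)) := univ.filter (fun i => (i : ℕ) < a) with hL0
  set A : Finset (Fin (a + b)) := L0.image π with hAdef
  have hmemA : ∀ x : Fin (a + b), x ∈ A ↔ (π.symm x : ℕ) < a := by
    intro x
    simp only [hAdef, mem_image, hL0, mem_filter, mem_univ, true_and]
    constructor
    · rintro ⟨j, hj, rfl⟩; simpa using hj
    · intro h; exact ⟨π.symm x, h, π.apply_symm_apply x⟩
  have hmemA' : ∀ j : Fin (a + b), π j ∈ A ↔ (j : ℕ) < a := by
    intro j; rw [hmemA]; simp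
  have hcardL0 : L0.card = a := by
    have h : L0 = Finset.Iio (⟨a, hba⟩ : Fin (a + b)) := by
      ext i; simp [hL0, Fin.lt_def]
    rw [h, Fin.card_Iio]
  have hcardA : A.card = a := by
    rw [hAdef, Finset.card_image_of_injective _ π.injective, hcardL0]
  -- key1 : inv W + e W = ∑ values of W
  have key1 : ∀ W : Finset (Fin (a + b)),
      (∑ x ∈ W, ∑ y ∈ Wᶜ, if y < x then (1:ℕ) else 0)
        + (∑ x ∈ W, ∑ y ∈ W, if y < x then (1:ℕ) else 0)
      = ∑ x ∈ W, (x : ℕ) := by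
    intro W
    rw [← Finset.sum_add_distrib]
    refine Finset.sum_congr rfl fun x _ => ?_
    rw [add_comm, Finset.sum_add_sum_compl]
    rw [← Finset.card_filter]
    have h : univ.filter (fun y : Fin (a + b) => y < x) = Finset.Iio x := by
      ext y; simp
    rw [h, Fin.card_Iio]
  -- key2 : 2 * e W + #W = #W * #W
  have key2 : ∀ W : Finset (Fin (a + b)),
      2 * (∑ x ∈ W, ∑ y ∈ W, if y < x then (1:ℕ) else 0) + W.card = W.card * W.card := by
    intro W
    have hswap : (∑ x ∈ W, ∑ y ∈ W, if y < x then (1:ℕ) else 0)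
        = ∑ x ∈ W, ∑ y ∈ W, if x < y then (1:ℕ) else 0 := Finset.sum_comm
    have h2 : (∑ x ∈ W, ∑ y ∈ W, if y < x then (1:ℕ) else 0)
          + (∑ x ∈ W, ∑ y ∈ W, if x < y then (1:ℕ) else 0)
        = ∑ _x ∈ W, (W.card - 1) := by
      rw [← Finset.sum_add_distrib]
      refine Finset.sum_congr rfl fun x hx => ?_
      rw [← Finset.sum_add_distrib]
      rw [Finset.sum_congr rfl fun y _ => ite_lt_add_ite_lt x y]
      have h1 : (∑ y ∈ W, if y = x then (1:ℕ) else 0) = 1 := by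
        rw [Finset.sum_ite_eq' W x (fun _ => (1:ℕ))]
        simp [hx]
      have h2 : (∑ y ∈ W, if y = x then 0 else (1:ℕ))
          + (∑ y ∈ W, if y = x then (1:ℕ) else 0) = W.card := by
        rw [← Finset.sum_add_distrib]
        have : ∀ y ∈ W, ((if y = x then 0 else (1:ℕ)) + if y = x then 1 else 0) = 1 := by
          intro y _; by_cases h : y = x <;> simp [h]
        rw [Finset.sum_congr rfl this, Finset.sum_const, smul_eq_mul, mul_one]
      rw [h1] at h2
      exact Nat.eq_sub_of_add_eq h2
    rw [two_mul, hswap] at *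
    rw [hswap, h2, Finset.sum_const, smul_eq_mul]
    rcases Nat.eq_zero_or_pos W.card with h | h
    · simp [h]
    · have : W.card - 1 + 1 = W.card := Nat.succ_pred_eq_of_pos h
      nlinarith [this]
  have einvA := key1 A
  have einvL := key1 L0
  have hinvL0 : (∑ x ∈ L0, ∑ y ∈ L0ᶜ, if y < x then (1:ℕ) else 0) = 0 := by
    apply Finset.sum_eq_zero; intro x hx
    apply Finset.sum_eq_zero; intro y hy
    simp only [hL0, mem_filter, Finset.mem_compl, mem_univ, true_and, not_lt] at hx hy
    rw [if_neg]
    rw [Fin.lt_def]; omega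
  have heAL : (∑ x ∈ A, ∑ y ∈ A, if y < x then (1:ℕ) else 0)
      = ∑ x ∈ L0, ∑ y ∈ L0, if y < x then (1:ℕ) else 0 := by
    have h1 := key2 A
    have h2 := key2 L0
    rw [hcardA] at h1
    rw [hcardL0] at h2
    omega
  -- Step 1 : the inversion count equals inv A
  have hcase : ∀ u v : Fin (a + b), u < v → π v < π u → (u : ℕ) < a ∧ a ≤ (v : ℕ) := by
    intro u v huv hπ
    by_cases h1 : (u : ℕ) < a
    · by_cases h2 : a ≤ (v : ℕ)
      · exact ⟨h1, h2⟩
      · have := hL h1 (show (v : ℕ) < a from not_le.mp h2) huv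
        exact absurd hπ (asymm this)
    · have huv' : (u : ℕ) < (v : ℕ) := huv
      have h2 : a ≤ (v : ℕ) := le_trans (not_lt.mp h1) (le_of_lt huv')
      have := hR (not_lt.mp h1) h2 huv
      exact absurd hπ (asymm this)
  have hstep1 : (univ.filter
        (fun p : Fin (a + b) × Fin (a + b) => p.1 < p.2 ∧ π p.2 < π p.1)).card
      = ∑ x ∈ A, ∑ y ∈ Aᶜ, if y < x then (1:ℕ) else 0 := by
    have hrw : (∑ x ∈ A, ∑ y ∈ Aᶜ, if y < x then (1:ℕ) else 0)
        = ((A ×ˢ Aᶜ).filter (fun p => p.2 < p.1)).card := by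
      rw [Finset.card_filter, Finset.sum_product]
    rw [hrw]
    refine Finset.card_bij' (fun p _ => (π p.1, π p.2))
      (fun q _ => (π.symm q.1, π.symm q.2)) ?_ ?_ ?_ ?_
    · intro p hp
      simp only [mem_filter, mem_univ, true_and] at hp
      obtain ⟨hlt, hπlt⟩ := hp
      obtain ⟨h1, h2⟩ := hcase p.1 p.2 hlt hπlt
      simp only [mem_filter, Finset.mem_product, Finset.mem_compl]
      refine ⟨⟨(hmemA' p.1).mpr h1, ?_⟩, hπlt⟩
      rw [hmemA' p.2]; omega
    · intro q hq
      simp only [mem_filter, Finset.mem_product, Finset.mem_compl] at hq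
      obtain ⟨⟨hq1, hq2⟩, hqlt⟩ := hq
      simp only [mem_filter, mem_univ, true_and]
      have h1 : (π.symm q.1 : ℕ) < a := (hmemA q.1).mp hq1
      have h2 : a ≤ (π.symm q.2 : ℕ) := by
        by_contra h
        exact hq2 ((hmemA q.2).mpr (not_le.mp h))
      constructor
      · rw [Fin.lt_def]; omega
      · simpa using hqlt
    · intro p _; simp
    · intro q _; simp
  -- description of M
  have hMfilter : (Finset.univ.filter (fun i : Fin (a + b) =>
        (i : ℕ) < a ∧ ∃ j : Fin (a + b), a ≤ (j : ℕ) ∧ π j = i))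
      = L0.filter (fun i => i ∉ A) := by
    ext i
    simp only [mem_filter, mem_univ, true_and, hL0, hmemA]
    constructor
    · rintro ⟨h1, j, hj, rfl⟩
      refine ⟨h1, ?_⟩
      simpa using not_lt.mpr hj
    · rintro ⟨h1, h2⟩
      exact ⟨h1, π.symm i, not_lt.mp h2, π.apply_symm_apply i⟩
  have hM : M = (L0.filter (fun i => i ∉ A)).image (fun i : Fin (a + b) => (i : ℕ) + 1) := by
    rw [hMdef, hMfilter]
  have hinj1 : ∀ x ∈ L0.filter (fun i => i ∉ A), ∀ y ∈ L0.filter (fun i => i ∉ A),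
      (x : ℕ) + 1 = (y : ℕ) + 1 → x = y := by
    intro x _ y _ h; exact Fin.ext (by omega)
  have ht : (t : ℕ) = (L0.filter (fun i => i ∉ A)).card := by
    rw [htdef, hM, Finset.card_image_of_injOn hinj1]
  have hMsum : (∑ m ∈ M, (m : ℤ))
      = (∑ i ∈ L0.filter (fun i => i ∉ A), ((i : ℕ) : ℤ))
        + (L0.filter (fun i => i ∉ A)).card := by
    rw [hM, Finset.sum_image hinj1]
    push_cast
    rw [Finset.sum_add_distrib, Finset.sum_const, nsmul_eq_mul, mul_one]
  -- description of N
  have hN : N = (A.filter (fun x : Fin (a + b) => a ≤ (x : ℕ))).image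
      (fun x : Fin (a + b) => a + b - (x : ℕ)) := by
    rw [hNdef]
    ext ν
    simp only [mem_filter, mem_Icc, mem_image]
    constructor
    · rintro ⟨⟨h1ν, h2ν⟩, j, hj, hπj⟩
      refine ⟨π j, ⟨(hmemA' j).mpr hj, by omega⟩, by omega⟩
    · rintro ⟨x, ⟨hxA, hxa⟩, rfl⟩
      have hxlt : (x : ℕ) < a + b := x.isLt
      refine ⟨⟨by omega, by omega⟩, ?_⟩
      rw [hAdef, mem_image] at hxA
      obtain ⟨j, hj, rfl⟩ := hxA
      rw [hL0, mem_filter] at hj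
      exact ⟨j, hj.2, by omega⟩
  have hinj2 : ∀ x ∈ A.filter (fun x : Fin (a + b) => a ≤ (x : ℕ)), ∀ y ∈ A.filter (fun x : Fin (a + b) => a ≤ (x : ℕ)),
      a + b - (x : ℕ) = a + b - (y : ℕ) → x = y := by
    intro x _ y _ h
    have hx := x.isLt; have hy := y.isLt
    exact Fin.ext (by omega)
  have hNsum : (∑ ν ∈ N, (ν : ℤ))
      = ((A.filter (fun x : Fin (a + b) => a ≤ (x : ℕ))).card : ℤ) * (a + b : ℤ)
        - ∑ x ∈ A.filter (fun x : Fin (a + b) => a ≤ (x : ℕ)), ((x : ℕ) : ℤ) := by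
    rw [hN, Finset.sum_image hinj2]
    have hpt : ∀ x ∈ A.filter (fun x : Fin (a + b) => a ≤ (x : ℕ)),
        ((a + b - (x : ℕ) : ℕ) : ℤ) = (a + b : ℤ) - ((x : ℕ) : ℤ) := by
      intro x _
      have := x.isLt
      push_cast [Nat.cast_sub (le_of_lt x.isLt)]
      ring
    rw [Finset.sum_congr rfl hpt, Finset.sum_sub_distrib, Finset.sum_const, nsmul_eq_mul]
  -- card of upper part of A equals t
  have hsplitA := Finset.card_filter_add_card_filter_not
    (s := A) (p := fun x : Fin (a + b) => (x : ℕ) < a)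
  have hsplitL := Finset.card_filter_add_card_filter_not
    (s := L0) (p := fun i : Fin (a + b) => i ∈ A)
  have hAloweq : A.filter (fun x : Fin (a + b) => (x : ℕ) < a) = L0.filter (fun i => i ∈ A) := by
    ext x
    simp only [mem_filter, hL0, mem_univ, true_and]
    tauto
  have hAge : A.filter (fun x : Fin (a + b) => ¬ (x : ℕ) < a) = A.filter (fun x : Fin (a + b) => a ≤ (x : ℕ)) := by
    ext x; simp [not_lt]
  have hcardge : (A.filter (fun x : Fin (a + b) => a ≤ (x : ℕ))).card
      = (L0.filter (fun i => i ∉ A)).card := by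
    rw [hAloweq, hAge] at hsplitA
    rw [hcardA] at hsplitA
    rw [hcardL0] at hsplitL
    omega
  rw [hcardge] at hNsum
  -- sum partitions
  have hTsplit := Finset.sum_filter_add_sum_filter_not L0
    (fun i : Fin (a + b) => i ∈ A) (fun i : Fin (a + b) => (i : ℕ))
  have hSAsplit := Finset.sum_filter_add_sum_filter_not A
    (fun x : Fin (a + b) => (x : ℕ) < a) (fun x : Fin (a + b) => (x : ℕ))
  rw [hAloweq, hAge] at hSAsplit
  -- finish
  rw [hstep1, hMsum, hNsum, ht]
  have hcast1 : ((∑ x ∈ A, ∑ y ∈ Aᶜ, if y < x then (1:ℕ) else 0 : ℕ) : ℤ)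
      + ((∑ x ∈ A, ∑ y ∈ A, if y < x then (1:ℕ) else 0 : ℕ) : ℤ)
      = ((∑ x ∈ A, (x : ℕ) : ℕ) : ℤ) := by exact_mod_cast einvA
  have hcast2 : ((∑ x ∈ L0, ∑ y ∈ L0, if y < x then (1:ℕ) else 0 : ℕ) : ℤ)
      = ((∑ x ∈ L0, (x : ℕ) : ℕ) : ℤ) := by
    rw [← einvL, hinvL0]; push_cast; ring
  rw [heAL] at hcast1
  have hcast3 : ((∑ x ∈ L0, (x : ℕ) : ℕ) : ℤ)
      = (∑ i ∈ L0.filter (fun i => i ∈ A), ((i : ℕ) : ℤ))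
        + ∑ i ∈ L0.filter (fun i => i ∉ A), ((i : ℕ) : ℤ) := by
    rw [← hTsplit]; push_cast; ring
  have hcast4 : ((∑ x ∈ A, (x : ℕ) : ℕ) : ℤ)
      = (∑ i ∈ L0.filter (fun i => i ∈ A), ((i : ℕ) : ℤ))
        + ∑ x ∈ A.filter (fun x : Fin (a + b) => a ≤ (x : ℕ)), ((x : ℕ) : ℤ) := by
    rw [← hSAsplit]; push_cast; ring
  have hcardge' : ((A.filter (fun x : Fin (a + b) => a ≤ (x : ℕ))).card : ℤ)
      = ((L0.filter (fun i => i ∉ A)).card : ℤ) := by exact_mod_cast hcardge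
  push_cast at hcast1 hcast2 hcast3 hcast4 ⊢
  linarith [hcast1, hcast2, hcast3, hcast4, hcardge']
end

section
/- Let a, b ≥ 1 and let π be a Lorenz permutation of {1,…,a+b} with trip number t and with μ_1 < … < μ_t and ν_1 < … < ν_t defined from π as below. If in addition π is a single cycle of length a+b (so that the associated Lorenz link is a knot), then the integer (a+b)(t−1) − Σ_{k=1}^t μ_k − Σ_{k=1}^t ν_k + (t+1) is even; consequently the unknotting-number formula u(K) = ½((a+b)(t−1) − Σ μ_k − Σ ν_k + (t+1)) for the Lorenz knot K determined by π yields an integer. -/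
/-!
Index the points from `0` and let `L = {0, …, a - 1}`. As `π` is increasing on `L` and on its
complement, every inversion `i < j`, `π j < π i` has `i ∈ L`, and for `i ∈ L` the `π i` points
mapped below `π i` are the `i` points before `i` and `π i - i` inversion partners after it. Hence
`inv π = ∑_{i ∈ L} (π i - i) = ∑ V - ∑ M` with `M = L \ π L` and `V = π L \ L`. The `μ` are
`M + 1`, the `ν` are `a + b - V`, and `#M = #V = t`, so the integer in question is
`inv π - (a + b) + 1`, which is even because an `(a + b)`-cycle has sign `(-1) ^ (a + b - 1)`.
-/

open Finset

theorem Fin.sum_image_val_add_one {n : ℕ} (s : Finset (Fin n)) :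
    ∑ m ∈ s.image (fun i : Fin n => (i : ℕ) + 1), (m : ℤ) = ∑ i ∈ s, (i : ℤ) + #s := by
  rw [sum_image fun i _ j _ h => Fin.ext (Nat.succ_injective h)]
  simp [sum_add_distrib]

theorem Fin.sum_image_sub_val {n : ℕ} (s : Finset (Fin n)) :
    ∑ ν ∈ s.image (fun i : Fin n => n - (i : ℕ)), (ν : ℤ) = #s * n - ∑ i ∈ s, (i : ℤ) := by
  have hcancel (i : Fin n) : ((n - i : ℕ) : ℤ) + ((i : ℕ) : ℤ) = n := by
    have := i.isLt
    omega
  rw [sum_image fun i _ j _ h => Fin.ext (by omega), eq_sub_iff_add_eq, ← sum_add_distrib,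
    sum_congr rfl fun i _ => hcancel i, Finset.sum_const, nsmul_eq_mul]

def leftPoints (n a : ℕ) : Finset (Fin n) := {i | (i : ℕ) < a}

@[simp]
theorem mem_leftPoints {n a : ℕ} {i : Fin n} : i ∈ leftPoints n a ↔ (i : ℕ) < a := by
  simp [leftPoints]

namespace Equiv.Perm

variable {n : ℕ}

def numInversions (σ : Perm (Fin n)) : ℕ := ∑ i, #{j ∈ Ioi i | σ j < σ i}

theorem sign_eq_neg_one_pow_numInversions (σ : Perm (Fin n)) :
    sign σ = (-1) ^ σ.numInversions := by
  rw [sign_eq_prod_prod_Ioi, numInversions, ← prod_pow_eq_pow_sum]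
  refine prod_congr rfl fun i _ => ?_
  rw [prod_ite, prod_const_one, prod_const, one_mul]
  congr 2
  refine filter_congr fun j hj => ?_
  rw [not_lt, le_iff_lt_or_eq, or_iff_left (σ.injective.ne (mem_Ioi.1 hj).ne')]

theorem card_filter_apply_lt_apply (σ : Perm (Fin n)) (i : Fin n) :
    #{j | σ j < σ i} = σ i := by
  rw [← Fin.card_Iio, ← card_map σ.toEmbedding]
  congr 1
  ext j
  simp

theorem card_filter_Iio_add_card_filter_Ioi (σ : Perm (Fin n)) (i : Fin n) :
    #{j ∈ Iio i | σ j < σ i} + #{j ∈ Ioi i | σ j < σ i} = σ i := by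
  rw [← card_union_of_disjoint, ← σ.card_filter_apply_lt_apply i, ← filter_union]
  · congr 1
    ext j
    simp only [mem_filter, mem_union, mem_Iio, mem_Ioi, mem_univ, true_and]
    rcases lt_trichotomy j i with h | rfl | h
    · simp [h]
    · simp
    · simp [h, h.not_gt]
  · exact disjoint_filter_filter (disjoint_Ioi_Iio i).symm

theorem IsCycle.even_numInversions_add_card_support_add_one {σ : Perm (Fin n)}
    (hσ : σ.IsCycle) :
    Even (σ.numInversions + #σ.support + 1) := by
  have h := hσ.sign
  rw [sign_eq_neg_one_pow_numInversions] at h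
  rw [← neg_one_pow_eq_one_iff_even (R := ℤˣ) (by decide), pow_succ, pow_add, h]
  simp

section StrictMonoOnBlocks

variable {a : ℕ} {σ : Perm (Fin n)}

theorem card_filter_Ioi_apply_lt_add_val_eq (hL : StrictMonoOn σ {i | (i : ℕ) < a})
    {i : Fin n} (hi : (i : ℕ) < a) : #{j ∈ Ioi i | σ j < σ i} + i = σ i := by
  have hIio : {j ∈ Iio i | σ j < σ i} = Iio i :=
    filter_true_of_mem fun j hj => hL (by simp at hj ⊢; omega) hi (mem_Iio.1 hj)
  rw [← σ.card_filter_Iio_add_card_filter_Ioi i, hIio, Fin.card_Iio, add_comm]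

theorem card_filter_Ioi_apply_lt_eq_zero (hR : StrictMonoOn σ {i | a ≤ (i : ℕ)})
    {i : Fin n} (hi : a ≤ (i : ℕ)) : #{j ∈ Ioi i | σ j < σ i} = 0 := by
  refine card_eq_zero.2 (filter_false_of_mem fun j hj => ?_)
  have hij : i < j := mem_Ioi.1 hj
  exact (hR hi (hi.trans (Fin.le_iff_val_le_val.1 hij.le)) hij).not_gt

theorem numInversions_eq_sum_sdiff_sub_sum_sdiff (hL : StrictMonoOn σ {i | (i : ℕ) < a})
    (hR : StrictMonoOn σ {i | a ≤ (i : ℕ)}) :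
    (σ.numInversions : ℤ) = ∑ v ∈ (leftPoints n a).image σ \ leftPoints n a, (v : ℤ) -
      ∑ i ∈ leftPoints n a \ (leftPoints n a).image σ, (i : ℤ) := by
  have hsplit : (σ.numInversions : ℤ) = ∑ i ∈ leftPoints n a, ((σ i : ℤ) - i) := by
    rw [numInversions, Nat.cast_sum, leftPoints, sum_filter]
    refine sum_congr rfl fun i _ => ?_
    split_ifs with hi
    · rw [← card_filter_Ioi_apply_lt_add_val_eq hL hi]
      push_cast; ring
    · rw [card_filter_Ioi_apply_lt_eq_zero hR (not_lt.1 hi), Nat.cast_zero]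
  rw [hsplit, sum_sdiff_sub_sum_sdiff, sum_sub_distrib, sum_image fun i _ j _ h => σ.injective h]

end StrictMonoOnBlocks

section LorenzData

variable {a b : ℕ} (σ : Perm (Fin (a + b)))

theorem filter_lt_exists_le_apply_eq :
    ({i | (i : ℕ) < a ∧ ∃ j : Fin (a + b), a ≤ (j : ℕ) ∧ σ j = i} : Finset (Fin (a + b))) =
      leftPoints (a + b) a \ (leftPoints (a + b) a).image σ := by
  ext i
  simp only [mem_filter, mem_sdiff, mem_image, mem_univ, mem_leftPoints, true_and, not_exists,
    not_and]
  refine and_congr_right fun _ => ⟨?_, fun h => ?_⟩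
  · rintro ⟨j, hj, rfl⟩ k hk hkj
    have := σ.injective hkj
    omega
  · obtain ⟨j, rfl⟩ := σ.surjective i
    exact ⟨j, not_lt.1 fun hj => h j hj rfl, rfl⟩

theorem filter_Icc_exists_apply_eq :
    (Icc 1 b).filter (fun ν => ∃ j : Fin (a + b), (j : ℕ) < a ∧ (σ j : ℕ) + 1 = a + b - ν + 1) =
      ((leftPoints (a + b) a).image σ \ leftPoints (a + b) a).image
        (fun i : Fin (a + b) => a + b - (i : ℕ)) := by
  ext ν
  simp only [mem_filter, mem_Icc, mem_sdiff, mem_image, mem_leftPoints]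
  constructor
  · rintro ⟨hν, j, hj, hσj⟩
    exact ⟨σ j, ⟨⟨j, hj, rfl⟩, by omega⟩, by omega⟩
  · rintro ⟨_, ⟨⟨j, hj, rfl⟩, hσj⟩, rfl⟩
    have := (σ j).isLt
    exact ⟨by omega, j, hj, by omega⟩

end LorenzData

end Equiv.Perm

theorem lorenz_unknotting_formula_even_general (a b : ℕ)
    (π : Equiv.Perm (Fin (a + b)))
    (hL : StrictMonoOn π {i : Fin (a + b) | (i : ℕ) < a})
    (hR : StrictMonoOn π {i : Fin (a + b) | a ≤ (i : ℕ)})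
    (hcycle : π.IsCycle ∧ π.support.card = a + b) :
    letI M : Finset ℕ :=
      (Finset.univ.filter (fun i : Fin (a + b) =>
        (i : ℕ) < a ∧ ∃ j : Fin (a + b), a ≤ (j : ℕ) ∧ π j = i)).image
        (fun i : Fin (a + b) => (i : ℕ) + 1)
    letI N : Finset ℕ :=
      (Finset.Icc 1 b).filter (fun ν =>
        ∃ j : Fin (a + b), (j : ℕ) < a ∧ (π j : ℕ) + 1 = a + b - ν + 1)
    letI t : ℕ := M.card
    Even ((a + b : ℤ) * ((t : ℤ) - 1) - (∑ m ∈ M, (m : ℤ)) - (∑ ν ∈ N, (ν : ℤ))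
      + ((t : ℤ) + 1)) := by
  have hinv := π.numInversions_eq_sum_sdiff_sub_sum_sdiff hL hR
  obtain ⟨k, hk⟩ := hcycle.2 ▸ hcycle.1.even_numInversions_add_card_support_add_one
  have hk' : (π.numInversions : ℤ) + (a + b) + 1 = k + k := by exact_mod_cast hk
  rw [π.filter_lt_exists_le_apply_eq, π.filter_Icc_exists_apply_eq,
    card_image_of_injective _ fun i j h => Fin.ext (Nat.succ_injective h),
    Fin.sum_image_val_add_one, Fin.sum_image_sub_val,
    card_sdiff_comm (card_image_of_injective _ π.injective)]
  push_cast
  exact ⟨k - a - b, by linear_combination hk' - hinv⟩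

/-- Parity of the unknotting-number formula for Lorenz knots.  Points are
indexed `0,…,a+b-1` (0-indexed versions of the 1-based labels `1,…,a+b`):
indices `< a` are the left-hand points `p_1 < … < p_a`, indices `≥ a` are the
right-hand points `q_b < … < q_1` (so `q_ν` has 1-based label `a+b−ν+1`).
A Lorenz permutation `π` is strictly increasing on each of the two blocks.
`M` is the set of (1-based) positions `μ_1 < … < μ_t` of
`{1,…,a} ∩ π({a+1,…,a+b})`, `N` is the set of indices `ν_1 < … < ν_t` with
`q_ν ∈ π({1,…,a})`, and `t = #M` is the trip number.  If `π` is a single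
cycle of length `a+b` (so that the Lorenz link is a knot `K`), then
`(a+b)(t−1) − Σμ_k − Σν_k + (t+1)` is even, so the formula
`u(K) = ½((a+b)(t−1) − Σμ_k − Σν_k + (t+1))` yields an integer. -/
theorem lorenz_unknotting_formula_even (a b : ℕ) (ha : 1 ≤ a) (hb : 1 ≤ b)
    (π : Equiv.Perm (Fin (a + b)))
    (hL : StrictMonoOn π {i : Fin (a + b) | (i : ℕ) < a})
    (hR : StrictMonoOn π {i : Fin (a + b) | a ≤ (i : ℕ)})
    (hcycle : π.IsCycle ∧ π.support.card = a + b) :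
    letI M : Finset ℕ :=
      (Finset.univ.filter (fun i : Fin (a + b) =>
        (i : ℕ) < a ∧ ∃ j : Fin (a + b), a ≤ (j : ℕ) ∧ π j = i)).image
        (fun i : Fin (a + b) => (i : ℕ) + 1)
    letI N : Finset ℕ :=
      (Finset.Icc 1 b).filter (fun ν =>
        ∃ j : Fin (a + b), (j : ℕ) < a ∧ (π j : ℕ) + 1 = a + b - ν + 1)
    letI t : ℕ := M.card
    Even ((a + b : ℤ) * ((t : ℤ) - 1) - (∑ m ∈ M, (m : ℤ)) - (∑ ν ∈ N, (ν : ℤ))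
      + ((t : ℤ) + 1)) :=
  lorenz_unknotting_formula_even_general a b π hL hR hcycle
end
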